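/- Let K be a field equipped with a surjective discrete valuation v : K^* → ℤ, with valuation ring O, group of units U = O^*, maximal ideal m, and residue field k_v = O/m; for u ∈ U write ū ∈ k_v^* for its residue. Let n ≥ 1. Then there exists a unique group homomorphism θ : ⋀^n_ℤ(K^*) → ⋀^{n−1}_ℤ(k_v^*) such that: (i) θ(u_1 ∧ ⋯ ∧ u_n) = 0 for all u_1, …, u_n ∈ U, and (ii) θ(π ∧ u_1 ∧ ⋯ ∧ u_{n−1}) = ū_1 ∧ ⋯ ∧ ū_{n−1} for every element π ∈ K^* with v(π) = 1 and all u_1, …, u_{n−1} ∈ U. In particular θ is independent of the choice of uniformizer π: the homomorphism determined by conditions (i) and (ii) for one fixed uniformizer automatically satisfies (ii) for every uniformizer. -/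
import Mathlib


open IsDedekindDomain

noncomputable section

variable (K : Type*) [Field K] (v : Valuation K (WithZero (Multiplicative ℤ)))

/-- The subgroup of units of `K` of valuation `0` (multiplicatively: `v u = 1`) is exactly the
unit group of the valuation ring `O = {x : v x ≤ 1}`; `unitEmb` is its embedding into `K^*`. -/
def unitEmb : v.valuationSubringˣ →* Kˣ := Units.map v.valuationSubring.subtype.toMonoidHom

/-- The reduction map `U = O^* → k_v^*` to the units of the residue field. -/
def unitRes : v.valuationSubringˣ →* (IsLocalRing.ResidueField v.valuationSubring)ˣ :=
  Units.map (IsLocalRing.residue v.valuationSubring).toMonoidHom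

set_option synthInstance.maxHeartbeats 1000000
set_option maxHeartbeats 1000000

namespace St8
variable {K : Type*} [Field K]

def vint (v : Valuation K (WithZero (Multiplicative ℤ))) (x : Kˣ) : ℤ :=
  - Multiplicative.toAdd (WithZero.unzero (x := v (x : K))
    ((Valuation.ne_zero_iff v).mpr x.ne_zero))

variable {v : Valuation K (WithZero (Multiplicative ℤ))}

lemma vint_spec (x : Kˣ) : v (x : K) = Multiplicative.ofAdd (- vint v x) := by
  unfold vint
  rw [neg_neg]
  rw [ofAdd_toAdd, WithZero.coe_unzero]

lemma vint_unique {x : Kˣ} {n : ℤ} (h : v (x : K) = Multiplicative.ofAdd (-n)) :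
    vint v x = n := by
  have h2 := vint_spec (v := v) x
  rw [h] at h2
  have := WithZero.coe_inj.mp h2
  simpa using (Multiplicative.ofAdd.injective this).symm

lemma vint_mul (x y : Kˣ) : vint v (x * y) = vint v x + vint v y := by
  apply vint_unique
  rw [show ((x * y : Kˣ) : K) = (x : K) * y by rfl, map_mul, vint_spec x, vint_spec y,
    ← WithZero.coe_mul, ← ofAdd_add, neg_add]

lemma v_unitEmb (u : v.valuationSubringˣ) : v ((unitEmb K v u : Kˣ) : K) = 1 := by
  exact (Valuation.mem_unitGroup_iff (v := v) (x := unitEmb K v u)).mp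
    (v.valuationSubring.unitGroupMulEquiv.symm u).2

lemma vint_unitEmb (u : v.valuationSubringˣ) : vint v (unitEmb K v u) = 0 := by
  apply vint_unique; rw [v_unitEmb]; rfl

end St8

namespace St8
variable {K : Type*} [Field K] {v : Valuation K (WithZero (Multiplicative ℤ))}

/-- Make a unit of the valuation subring from a unit of `K` of valuation one. -/
def unitOf (y : Kˣ) (h : v (y : K) = 1) : v.valuationSubringˣ :=
  v.valuationSubring.unitGroupMulEquiv ⟨y, (Valuation.mem_unitGroup_iff (v := v) (x := y)).mpr h⟩

lemma unitEmb_unitOf (y : Kˣ) (h : v (y : K) = 1) : unitEmb K v (unitOf y h) = y := by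
  have := v.valuationSubring.unitGroupMulEquiv.symm_apply_apply
    ⟨y, (Valuation.mem_unitGroup_iff (v := v) (x := y)).mpr h⟩
  exact congrArg Subtype.val this

lemma unitEmb_injective : Function.Injective (unitEmb K v) :=
  Units.map_injective (Subtype.val_injective)

lemma unitOf_unitEmb (u : v.valuationSubringˣ) (h : v ((unitEmb K v u : Kˣ) : K) = 1) :
    unitOf (unitEmb K v u) h = u :=
  unitEmb_injective (unitEmb_unitOf _ _)

variable (v) in
def dfun (π₀ : Kˣ) (x : Kˣ) : Kˣ := x * π₀ ^ (- vint v x)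

lemma v_dfun {π₀ : Kˣ} (hπ₀ : v (π₀ : K) = Multiplicative.ofAdd (-1 : ℤ)) (x : Kˣ) :
    v ((dfun v π₀ x : Kˣ) : K) = 1 := by
  have : ((dfun v π₀ x : Kˣ) : K) = (x : K) * (π₀ : K) ^ (- vint v x) := by
    simp [dfun, Units.val_mul, Units.val_zpow_eq_zpow_val]
  rw [this, map_mul, map_zpow₀, hπ₀, vint_spec x]
  rw [← WithZero.coe_zpow, ← WithZero.coe_mul, ← ofAdd_zsmul]
  norm_num

/-- The unit part of `x` relative to the uniformizer `π₀`, as a hom to `Oˣ`. -/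
def Dhom (π₀ : Kˣ) (hπ₀ : v (π₀ : K) = Multiplicative.ofAdd (-1 : ℤ)) :
    Kˣ →* v.valuationSubringˣ :=
  MonoidHom.mk' (fun x => unitOf (dfun v π₀ x) (v_dfun hπ₀ x)) (by
    intro x y
    apply unitEmb_injective
    rw [map_mul, unitEmb_unitOf, unitEmb_unitOf, unitEmb_unitOf]
    unfold dfun
    rw [vint_mul, neg_add, zpow_add]
    exact mul_mul_mul_comm x y _ _)

lemma unitEmb_Dhom (π₀ : Kˣ) (hπ₀ : v (π₀ : K) = Multiplicative.ofAdd (-1 : ℤ)) (x : Kˣ) :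
    unitEmb K v (Dhom π₀ hπ₀ x) = x * π₀ ^ (- vint v x) := unitEmb_unitOf _ (v_dfun hπ₀ x)

lemma Dhom_unitEmb (π₀ : Kˣ) (hπ₀ : v (π₀ : K) = Multiplicative.ofAdd (-1 : ℤ))
    (u : v.valuationSubringˣ) : Dhom π₀ hπ₀ (unitEmb K v u) = u := by
  apply unitEmb_injective
  rw [unitEmb_Dhom, vint_unitEmb, neg_zero, zpow_zero, mul_one]

end St8

namespace St8
open ExteriorAlgebra

section Contract
variable {R A : Type*} [CommRing R] {M : Type*} [AddCommGroup M] [Module R M]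

lemma contract_ιMulti_zero (d : Module.Dual R M) (k : ℕ) (w : Fin k → M)
    (h : ∀ j, d (w j) = 0) :
    CliffordAlgebra.contractLeft d (ExteriorAlgebra.ιMulti R k w) = 0 := by
  induction k with
  | zero => rw [ExteriorAlgebra.ιMulti_zero_apply]; exact CliffordAlgebra.contractLeft_one _ _
  | succ k ih =>
    rw [ExteriorAlgebra.ιMulti_succ_apply, CliffordAlgebra.contractLeft_ι_mul, h 0, zero_smul,
      zero_sub, ih (Matrix.vecTail w) (fun j => h j.succ), mul_zero, neg_zero]

lemma contract_ιMulti_mem (d : Module.Dual R M) (k : ℕ) (y : Fin (k + 1) → M) :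
    CliffordAlgebra.contractLeft d (ExteriorAlgebra.ιMulti R (k + 1) y) ∈ ⋀[R]^k M := by
  induction k with
  | zero =>
    rw [ExteriorAlgebra.ιMulti_succ_apply, CliffordAlgebra.contractLeft_ι_mul,
      ExteriorAlgebra.ιMulti_zero_apply, CliffordAlgebra.contractLeft_one, mul_zero, sub_zero]
    exact Submodule.smul_mem _ _ (SetLike.one_mem_graded _)
  | succ k ih =>
    rw [ExteriorAlgebra.ιMulti_succ_apply, CliffordAlgebra.contractLeft_ι_mul]
    refine sub_mem (Submodule.smul_mem _ _ (ExteriorAlgebra.ιMulti_range R (k+1)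
      (Set.mem_range_self _))) ?_
    have h1 : ExteriorAlgebra.ι R (y 0) ∈ ⋀[R]^1 M := by
      rw [exteriorPower, pow_one]; exact LinearMap.mem_range_self _ _
    have := SetLike.mul_mem_graded h1 (ih (Matrix.vecTail y))
    rwa [add_comm] at this

lemma apply_mem_of_forall_ιMulti {B : Type*} [AddCommGroup B] [Module R B]
    (f : ExteriorAlgebra R M →ₗ[R] B) (Q : Submodule R B) (k : ℕ)
    (h : ∀ y : Fin k → M, f (ExteriorAlgebra.ιMulti R k y) ∈ Q) :
    ∀ x ∈ ⋀[R]^k M, f x ∈ Q := by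
  intro x hx
  have hle : (⋀[R]^k M) ≤ Submodule.comap f Q := by
    rw [← ExteriorAlgebra.ιMulti_span_fixedDegree]
    refine Submodule.span_le.mpr ?_
    rintro _ ⟨y, rfl⟩; exact h y
  exact hle hx

end Contract
end St8

namespace St8
open ExteriorAlgebra
variable {K : Type*} [Field K] (v : Valuation K (WithZero (Multiplicative ℤ)))

local notation "NN" => Additive (IsLocalRing.ResidueField (Valuation.valuationSubring v))ˣ

def aLin : Additive Kˣ →ₗ[ℤ] ℤ :=
  (AddMonoidHom.mk' (fun x => vint v (Additive.toMul x)) (fun x y => by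
    simpa using vint_mul (v := v) (Additive.toMul x) (Additive.toMul y))).toIntLinearMap

variable {v}
variable {π₀ : Kˣ} (hπ₀ : v (π₀ : K) = Multiplicative.ofAdd (-1 : ℤ))

def cLin : Additive Kˣ →ₗ[ℤ] NN :=
  (MonoidHom.toAdditive ((unitRes K v).comp (Dhom π₀ hπ₀))).toIntLinearMap

def Phi : Additive Kˣ →ₗ[ℤ] ℤ × NN := (aLin v).prod (cLin hπ₀)

def Lmap : ExteriorAlgebra ℤ (Additive Kˣ) →ₗ[ℤ] ExteriorAlgebra ℤ NN :=
  (ExteriorAlgebra.map (LinearMap.snd ℤ ℤ NN)).toLinearMap ∘ₗ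
    CliffordAlgebra.contractLeft (LinearMap.fst ℤ ℤ NN) ∘ₗ
    (ExteriorAlgebra.map (Phi hπ₀)).toLinearMap

lemma Lmap_units (k : ℕ) (u : Fin k → v.valuationSubringˣ) :
    Lmap hπ₀ (ExteriorAlgebra.ιMulti ℤ k fun i => Additive.ofMul (unitEmb K v (u i))) = 0 := by
  show (ExteriorAlgebra.map (LinearMap.snd ℤ ℤ NN)).toLinearMap
    (CliffordAlgebra.contractLeft (LinearMap.fst ℤ ℤ NN)
      ((ExteriorAlgebra.map (Phi hπ₀)).toLinearMap (ExteriorAlgebra.ιMulti ℤ k _))) = 0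
  simp only [AlgHom.toLinearMap_apply]
  rw [ExteriorAlgebra.map_apply_ιMulti,
    contract_ιMulti_zero _ _ _ (fun j => vint_unitEmb (u j)), map_zero]

lemma Lmap_cons {m : ℕ} {π : Kˣ} (hπ : v (π : K) = Multiplicative.ofAdd (-1 : ℤ))
    (u : Fin m → v.valuationSubringˣ) :
    Lmap hπ₀ (ExteriorAlgebra.ιMulti ℤ (m + 1)
        (Fin.cons (Additive.ofMul π) (fun i => Additive.ofMul (unitEmb K v (u i))))) =
      ExteriorAlgebra.ιMulti ℤ m (fun i => Additive.ofMul (unitRes K v (u i))) := by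
  show (ExteriorAlgebra.map (LinearMap.snd ℤ ℤ NN)).toLinearMap
    (CliffordAlgebra.contractLeft (LinearMap.fst ℤ ℤ NN)
      ((ExteriorAlgebra.map (Phi hπ₀)).toLinearMap (ExteriorAlgebra.ιMulti ℤ (m+1) _))) = _
  have h1 : (Phi hπ₀ (v := v)) ∘ (Fin.cons (Additive.ofMul π)
      (fun i => Additive.ofMul (unitEmb K v (u i)))) =
      Fin.cons (Phi hπ₀ (Additive.ofMul π))
        (fun i => Phi hπ₀ (Additive.ofMul (unitEmb K v (u i)))) := by
    funext k
    refine Fin.cases ?_ (fun j => ?_) k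
    · simp
    · simp
  simp only [AlgHom.toLinearMap_apply]
  rw [ExteriorAlgebra.map_apply_ιMulti, h1,
    ExteriorAlgebra.ιMulti_succ_apply, CliffordAlgebra.contractLeft_ι_mul]
  have hfst : (LinearMap.fst ℤ ℤ NN) (Phi hπ₀ (Additive.ofMul π)) = 1 :=
    vint_unique (by exact_mod_cast hπ)
  have htail : Matrix.vecTail (Fin.cons (Phi hπ₀ (Additive.ofMul π))
      (fun i => Phi hπ₀ (Additive.ofMul (unitEmb K v (u i))))) =
      fun i => Phi hπ₀ (Additive.ofMul (unitEmb K v (u i))) := Matrix.tail_cons _ _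
  rw [htail, Fin.cons_zero, hfst, one_smul, contract_ιMulti_zero _ _ _ (fun j => vint_unitEmb (u j)),
    mul_zero, sub_zero, ExteriorAlgebra.map_apply_ιMulti]
  congr 1
  funext j
  show Additive.ofMul (unitRes K v (Dhom π₀ hπ₀ (unitEmb K v (u j)))) = _
  rw [Dhom_unitEmb]

lemma Lmap_mem (m : ℕ) (x : ExteriorAlgebra ℤ (Additive Kˣ))
    (hx : x ∈ ⋀[ℤ]^(m+1) (Additive Kˣ)) : Lmap hπ₀ x ∈ ⋀[ℤ]^m NN := by
  refine apply_mem_of_forall_ιMulti _ _ _ (fun y => ?_) x hx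
  show (ExteriorAlgebra.map (LinearMap.snd ℤ ℤ NN)).toLinearMap
    (CliffordAlgebra.contractLeft (LinearMap.fst ℤ ℤ NN)
      ((ExteriorAlgebra.map (Phi hπ₀)).toLinearMap (ExteriorAlgebra.ιMulti ℤ (m+1) y))) ∈ _
  simp only [AlgHom.toLinearMap_apply]
  rw [ExteriorAlgebra.map_apply_ιMulti]
  refine apply_mem_of_forall_ιMulti (ExteriorAlgebra.map (LinearMap.snd ℤ ℤ NN)).toLinearMap
    (⋀[ℤ]^m NN) m (fun z => ?_) _ (contract_ιMulti_mem _ m _)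
  simp only [AlgHom.toLinearMap_apply]
  rw [ExteriorAlgebra.map_apply_ιMulti]
  exact ExteriorAlgebra.ιMulti_range ℤ m (Set.mem_range_self _)

def Theta (m : ℕ) : (⋀[ℤ]^(m + 1) (Additive Kˣ)) →ₗ[ℤ] (⋀[ℤ]^m NN) :=
  LinearMap.codRestrict _ ((Lmap hπ₀) ∘ₗ (Submodule.subtype _))
    (fun c => Lmap_mem hπ₀ m _ c.2)

end St8

namespace St8
open ExteriorAlgebra
variable {K : Type*} [Field K] {v : Valuation K (WithZero (Multiplicative ℤ))}
variable {π₀ : Kˣ}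

local notation "NN" => Additive (IsLocalRing.ResidueField (Valuation.valuationSubring v))ˣ

def iMultiR (K : Type*) [Field K] (m : ℕ) :
    (Additive Kˣ) [⋀^Fin (m + 1)]→ₗ[ℤ] (⋀[ℤ]^(m + 1) (Additive Kˣ)) :=
  (ExteriorAlgebra.ιMulti ℤ (m + 1)).codRestrict _
    (fun y => ExteriorAlgebra.ιMulti_range ℤ (m + 1) (Set.mem_range_self y))

lemma span_iMultiR (K : Type*) [Field K] (m : ℕ) :
    Submodule.span ℤ (Set.range (iMultiR K m)) = ⊤ := by
  apply Submodule.map_injective_of_injective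
    (Submodule.injective_subtype (⋀[ℤ]^(m + 1) (Additive Kˣ)))
  rw [Submodule.map_span, Submodule.map_top, Submodule.range_subtype, ← Set.range_comp]
  exact ExteriorAlgebra.ιMulti_span_fixedDegree ℤ (m + 1)

theorem agree {m : ℕ} (hπ₀ : v (π₀ : K) = Multiplicative.ofAdd (-1 : ℤ))
    (θ θ' : (⋀[ℤ]^(m + 1) (Additive Kˣ)) →ₗ[ℤ] (⋀[ℤ]^m NN))
    (h1 : ∀ u : Fin (m + 1) → v.valuationSubringˣ,
      θ ⟨ExteriorAlgebra.ιMulti ℤ (m + 1) (fun i => Additive.ofMul (unitEmb K v (u i))),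
          ExteriorAlgebra.ιMulti_range ℤ (m + 1) (Set.mem_range_self _)⟩ = 0)
    (h1' : ∀ u : Fin (m + 1) → v.valuationSubringˣ,
      θ' ⟨ExteriorAlgebra.ιMulti ℤ (m + 1) (fun i => Additive.ofMul (unitEmb K v (u i))),
          ExteriorAlgebra.ιMulti_range ℤ (m + 1) (Set.mem_range_self _)⟩ = 0)
    (h2 : ∀ u : Fin m → v.valuationSubringˣ,
      θ ⟨ExteriorAlgebra.ιMulti ℤ (m + 1)
            (Fin.cons (Additive.ofMul π₀) (fun i => Additive.ofMul (unitEmb K v (u i)))),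
          ExteriorAlgebra.ιMulti_range ℤ (m + 1) (Set.mem_range_self _)⟩ =
        ⟨ExteriorAlgebra.ιMulti ℤ m (fun i => Additive.ofMul (unitRes K v (u i))),
          ExteriorAlgebra.ιMulti_range ℤ m (Set.mem_range_self _)⟩)
    (h2' : ∀ u : Fin m → v.valuationSubringˣ,
      θ' ⟨ExteriorAlgebra.ιMulti ℤ (m + 1)
            (Fin.cons (Additive.ofMul π₀) (fun i => Additive.ofMul (unitEmb K v (u i)))),
          ExteriorAlgebra.ιMulti_range ℤ (m + 1) (Set.mem_range_self _)⟩ =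
        ⟨ExteriorAlgebra.ιMulti ℤ m (fun i => Additive.ofMul (unitRes K v (u i))),
          ExteriorAlgebra.ιMulti_range ℤ m (Set.mem_range_self _)⟩) :
    θ = θ' := by
  classical
  set A : (Additive Kˣ) [⋀^Fin (m + 1)]→ₗ[ℤ] (⋀[ℤ]^m NN) :=
    θ.compAlternatingMap (iMultiR K m) - θ'.compAlternatingMap (iMultiR K m) with hAdef
  have hAunits : ∀ u : Fin (m + 1) → v.valuationSubringˣ,
      A (fun i => Additive.ofMul (unitEmb K v (u i))) = 0 := by
    intro u
    have e1 : θ (iMultiR K m (fun i => Additive.ofMul (unitEmb K v (u i)))) = 0 := h1 u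
    have e2 : θ' (iMultiR K m (fun i => Additive.ofMul (unitEmb K v (u i)))) = 0 := h1' u
    simp [hAdef, e1, e2]
  have hAcons : ∀ u : Fin m → v.valuationSubringˣ,
      A (Fin.cons (Additive.ofMul π₀) (fun i => Additive.ofMul (unitEmb K v (u i)))) = 0 := by
    intro u
    have e1 := h2 u
    have e2 := h2' u
    have e1' : θ (iMultiR K m (Fin.cons (Additive.ofMul π₀)
        (fun i => Additive.ofMul (unitEmb K v (u i))))) =
      ⟨ExteriorAlgebra.ιMulti ℤ m (fun i => Additive.ofMul (unitRes K v (u i))),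
        ExteriorAlgebra.ιMulti_range ℤ m (Set.mem_range_self _)⟩ := e1
    have e2' : θ' (iMultiR K m (Fin.cons (Additive.ofMul π₀)
        (fun i => Additive.ofMul (unitEmb K v (u i))))) =
      ⟨ExteriorAlgebra.ιMulti ℤ m (fun i => Additive.ofMul (unitRes K v (u i))),
        ExteriorAlgebra.ιMulti_range ℤ m (Set.mem_range_self _)⟩ := e2
    simp [hAdef, e1', e2']
  have hA : ∀ x : Fin (m + 1) → Additive Kˣ, A x = 0 := by
    intro x
    set c : Fin (m + 1) → ℤ := fun i => vint v (Additive.toMul (x i)) with hc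
    set g1 : Fin (m + 1) → Additive Kˣ := fun i => c i • Additive.ofMul π₀ with hg1
    set g2 : Fin (m + 1) → Additive Kˣ :=
      fun i => Additive.ofMul (unitEmb K v (Dhom π₀ hπ₀ (Additive.toMul (x i)))) with hg2
    have hx : x = g1 + g2 := by
      funext i
      apply Additive.toMul.injective
      show Additive.toMul (x i) = Additive.toMul (g1 i + g2 i)
      rw [toMul_add, hg1, hg2]
      show Additive.toMul (x i) = Additive.toMul (c i • Additive.ofMul π₀) *
        unitEmb K v (Dhom π₀ hπ₀ (Additive.toMul (x i)))
      rw [toMul_zsmul, toMul_ofMul, unitEmb_Dhom, hc]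
      symm
      rw [mul_left_comm, ← zpow_add]
      simp
    have hAx : A x = A.toMultilinearMap (g1 + g2) := by rw [← hx]; rfl
    rw [hAx, A.toMultilinearMap.map_add_univ g1 g2]
    refine Finset.sum_eq_zero (fun s _ => ?_)
    set b : Fin (m + 1) → Additive Kˣ := s.piecewise (fun _ => Additive.ofMul π₀) g2 with hb
    have hpw : s.piecewise g1 g2 = s.piecewise (fun i => c i • b i) b := by
      funext i
      by_cases h : i ∈ s
      · rw [Finset.piecewise_eq_of_mem _ _ _ h, Finset.piecewise_eq_of_mem _ _ _ h, hb,
          Finset.piecewise_eq_of_mem _ _ _ h]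
      · rw [Finset.piecewise_eq_of_notMem _ _ _ h, Finset.piecewise_eq_of_notMem _ _ _ h, hb,
          Finset.piecewise_eq_of_notMem _ _ _ h]
    rw [hpw, A.toMultilinearMap.map_piecewise_smul c b s]
    suffices hbz : A b = 0 by
      show _ • A b = 0
      rw [hbz, smul_zero]
    rcases Nat.lt_or_ge s.card 2 with hcard | hcard
    · by_cases hs : s = ∅
      · subst hs
        rw [hb, Finset.piecewise_empty]
        exact hAunits _
      · have hcard1 : s.card = 1 := by
          have := Finset.card_pos.mpr (Finset.nonempty_iff_ne_empty.mpr hs)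
          omega
        obtain ⟨i, rfl⟩ := Finset.card_eq_one.mp hcard1
        have hb1 : b = Function.update g2 i (Additive.ofMul π₀) := by
          rw [hb, Finset.piecewise_singleton]
        have hb2 : b = (Fin.cons (Additive.ofMul π₀) (fun j => g2 (i.succAbove j))) ∘
            (Fin.cycleRange i) := by
          funext k
          by_cases hk : k = i
          · subst hk
            rw [hb1, Function.update_self]
            simp only [Function.comp_apply]
            rw [Fin.cycleRange_self, Fin.cons_zero]
          · obtain ⟨j, rfl⟩ := Fin.exists_succAbove_eq hk
            rw [hb1, Function.update_of_ne (Fin.succAbove_ne i j)]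
            simp only [Function.comp_apply]
            rw [Fin.cycleRange_succAbove, Fin.cons_succ]
        have hzero : A (Fin.cons (Additive.ofMul π₀) (fun j => g2 (i.succAbove j))) = 0 :=
          hAcons (fun j => Dhom π₀ hπ₀ (Additive.toMul (x (i.succAbove j))))
        rw [hb2, A.map_perm, hzero, smul_zero]
    · obtain ⟨i, hi, j, hj, hij⟩ := Finset.one_lt_card.mp hcard
      refine A.map_eq_zero_of_eq b ?_ hij
      rw [hb, Finset.piecewise_eq_of_mem _ _ _ hi, Finset.piecewise_eq_of_mem _ _ _ hj]
  apply LinearMap.ext_on_range (span_iMultiR K m)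
  intro y
  have := hA y
  rw [hAdef] at this
  simpa [sub_eq_zero] using this

end St8


/-- let `v` be a surjective discrete valuation on a field `K` (written
multiplicatively, with values in `ℤₘ₀`; a uniformizer is `π` with `v π = ofAdd (−1)`,
i.e. additive valuation `1`).  For `n = m + 1 ≥ 1` there is a unique homomorphism
`θ : ⋀^{m+1}(K^*) → ⋀^m(k_v^*)` (of ℤ-modules, i.e. of abelian groups) such that
(i) `θ` kills wedges of units of `O` and (ii) `θ(π ∧ u_1 ∧ ⋯ ∧ u_m) = ū_1 ∧ ⋯ ∧ ū_m`
for every uniformizer `π` and units `u_i`.  In particular, a homomorphism satisfying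
(i) and (ii) for a single fixed uniformizer `π₀` automatically satisfies (ii) for
every uniformizer. -/
theorem statement_8 (hv : Function.Surjective v) (m : ℕ) :
    (∃! θ : (⋀[ℤ]^(m + 1) (Additive Kˣ)) →ₗ[ℤ]
        (⋀[ℤ]^m (Additive (IsLocalRing.ResidueField v.valuationSubring)ˣ)),
      (∀ u : Fin (m + 1) → v.valuationSubringˣ,
        θ ⟨ExteriorAlgebra.ιMulti ℤ (m + 1) (fun i => Additive.ofMul (unitEmb K v (u i))),
            ExteriorAlgebra.ιMulti_range ℤ (m + 1) (Set.mem_range_self _)⟩ = 0) ∧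
      (∀ π : Kˣ, v (π : K) = Multiplicative.ofAdd (-1 : ℤ) →
        ∀ u : Fin m → v.valuationSubringˣ,
          θ ⟨ExteriorAlgebra.ιMulti ℤ (m + 1)
                (Fin.cons (Additive.ofMul π)
                  (fun i => Additive.ofMul (unitEmb K v (u i)))),
              ExteriorAlgebra.ιMulti_range ℤ (m + 1) (Set.mem_range_self _)⟩ =
            ⟨ExteriorAlgebra.ιMulti ℤ m (fun i => Additive.ofMul (unitRes K v (u i))),
              ExteriorAlgebra.ιMulti_range ℤ m (Set.mem_range_self _)⟩)) ∧
    (∀ π₀ : Kˣ, v (π₀ : K) = Multiplicative.ofAdd (-1 : ℤ) →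
      ∀ θ : (⋀[ℤ]^(m + 1) (Additive Kˣ)) →ₗ[ℤ]
          (⋀[ℤ]^m (Additive (IsLocalRing.ResidueField v.valuationSubring)ˣ)),
        (∀ u : Fin (m + 1) → v.valuationSubringˣ,
          θ ⟨ExteriorAlgebra.ιMulti ℤ (m + 1) (fun i => Additive.ofMul (unitEmb K v (u i))),
              ExteriorAlgebra.ιMulti_range ℤ (m + 1) (Set.mem_range_self _)⟩ = 0) →
        (∀ u : Fin m → v.valuationSubringˣ,
          θ ⟨ExteriorAlgebra.ιMulti ℤ (m + 1)
                (Fin.cons (Additive.ofMul π₀)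
                  (fun i => Additive.ofMul (unitEmb K v (u i)))),
              ExteriorAlgebra.ιMulti_range ℤ (m + 1) (Set.mem_range_self _)⟩ =
            ⟨ExteriorAlgebra.ιMulti ℤ m (fun i => Additive.ofMul (unitRes K v (u i))),
              ExteriorAlgebra.ιMulti_range ℤ m (Set.mem_range_self _)⟩) →
        ∀ π : Kˣ, v (π : K) = Multiplicative.ofAdd (-1 : ℤ) →
          ∀ u : Fin m → v.valuationSubringˣ,
            θ ⟨ExteriorAlgebra.ιMulti ℤ (m + 1)
                  (Fin.cons (Additive.ofMul π)
                    (fun i => Additive.ofMul (unitEmb K v (u i)))),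
                ExteriorAlgebra.ιMulti_range ℤ (m + 1) (Set.mem_range_self _)⟩ =
              ⟨ExteriorAlgebra.ιMulti ℤ m (fun i => Additive.ofMul (unitRes K v (u i))),
                ExteriorAlgebra.ιMulti_range ℤ m (Set.mem_range_self _)⟩) := by
  classical
  obtain ⟨x, hx⟩ := hv ((Multiplicative.ofAdd (-1 : ℤ) : Multiplicative ℤ) :
    WithZero (Multiplicative ℤ))
  have hx0 : x ≠ 0 := by
    intro h
    rw [h, map_zero] at hx
    exact WithZero.zero_ne_coe hx
  set π₀ : Kˣ := Units.mk0 x hx0 with hπ₀def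
  have hπ₀ : v (π₀ : K) = Multiplicative.ofAdd (-1 : ℤ) := hx
  constructor
  · refine ⟨St8.Theta hπ₀ m, ⟨?_, ?_⟩, ?_⟩
    · intro u
      exact Subtype.ext (St8.Lmap_units hπ₀ (m + 1) u)
    · intro π hπ u
      exact Subtype.ext (St8.Lmap_cons hπ₀ hπ u)
    · rintro θ' ⟨hc1, hc2⟩
      exact St8.agree hπ₀ θ' (St8.Theta hπ₀ m) hc1
        (fun u => Subtype.ext (St8.Lmap_units hπ₀ (m + 1) u))
        (hc2 π₀ hπ₀)
        (fun u => Subtype.ext (St8.Lmap_cons hπ₀ hπ₀ u))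
  · intro π₀' hπ₀' θ ht1 ht2 π hπ u
    have hθ : θ = St8.Theta hπ₀' m :=
      St8.agree hπ₀' θ (St8.Theta hπ₀' m) ht1
        (fun u => Subtype.ext (St8.Lmap_units hπ₀' (m + 1) u))
        ht2
        (fun u => Subtype.ext (St8.Lmap_cons hπ₀' hπ₀' u))
    rw [hθ]
    exact Subtype.ext (St8.Lmap_cons hπ₀' hπ u)

end
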